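/- arXiv:1909.03061 — 9 statements merged into one kernel-verified Lean document; each statement's English description precedes it below -/
import Mathlib

section
/- Let X be a compact Hausdorff space with uniformity 𝒰 and f : X → X continuous. For every entourage E ∈ 𝒰 and every x ∈ X, there exist n ∈ ℕ and z ∈ X such that ω(z) ⊆ ⋃_{i=1}^{n} B_E(f^i(x)). -/
def omegaLim {X : Type*} [TopologicalSpace X] (f : X → X) (x : X) : Set X :=
  ⋂ N : ℕ, closure {y | ∃ n > N, f^[n] x = y}

/-!
Take `z = x`. Then `ω(x)` is a compact set lying in the closure of the forward orbit
`{fⁱ x | i ≥ 1}`, so finitely many `E`-balls centred at orbit points cover it.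
-/

open Set UniformSpace

theorem IsCompact.exists_finite_ball_cover_of_subset_closure_image {X ι : Type*}
    [UniformSpace X] {K : Set X} (hK : IsCompact K) {u : ι → X} {s : Set ι}
    (hKs : K ⊆ closure (u '' s)) {E : Set (X × X)} (hE : E ∈ uniformity X) :
    ∃ t ⊆ s, t.Finite ∧ K ⊆ ⋃ i ∈ t, ball (u i) E := by
  obtain ⟨D, ⟨hD, hDopen, hDsymm⟩, hDE⟩ := uniformity_hasBasis_open_symmetric.mem_iff.mp hE
  have hcover : K ⊆ ⋃ i ∈ s, ball (u i) D := by
    intro k hk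
    obtain ⟨_, hkD, i, hi, rfl⟩ := mem_closure_iff_nhds.mp (hKs hk) _ (ball_mem_nhds k hD)
    exact mem_biUnion hi (mem_ball_symmetry.mp hkD)
  obtain ⟨t, hts, htfin, hKt⟩ :=
    hK.elim_finite_subcover_image (fun i _ => isOpen_ball (u i) hDopen) hcover
  exact ⟨t, hts, htfin, hKt.trans (biUnion_mono subset_rfl fun i _ => ball_mono hDE (u i))⟩

section omegaLim

variable {X : Type*} [TopologicalSpace X] (f : X → X) (x : X)

theorem isClosed_omegaLim : IsClosed (omegaLim f x) :=
  isClosed_iInter fun _ => isClosed_closure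

theorem omegaLim_subset_closure_orbit (N : ℕ) :
    omegaLim f x ⊆ closure ((f^[·] x) '' Ioi N) :=
  iInter_subset _ N

end omegaLim

theorem omega_trapped_uniform_general {X : Type*} [UniformSpace X] [CompactSpace X]
    (f : X → X) (E : Set (X × X)) (hE : E ∈ uniformity X) (x : X) :
    ∃ n : ℕ, ∃ z : X, omegaLim f z ⊆ ⋃ i ∈ Finset.Icc 1 n, UniformSpace.ball (f^[i] x) E := by
  obtain ⟨t, ht_pos, ht_fin, hcover⟩ :=
    (isClosed_omegaLim f x).isCompact.exists_finite_ball_cover_of_subset_closure_image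
      (omegaLim_subset_closure_orbit f x 0) hE
  obtain ⟨n, hn⟩ := ht_fin.bddAbove
  refine ⟨n, x, hcover.trans (biUnion_mono (fun i hi => ?_) fun _ _ => subset_rfl)⟩
  exact Finset.mem_Icc.mpr ⟨ht_pos hi, hn hi⟩

theorem omega_trapped_uniform {X : Type*} [UniformSpace X] [CompactSpace X] [T2Space X]
    (f : X → X) (hf : Continuous f) (E : Set (X × X)) (hE : E ∈ uniformity X) (x : X) :
    ∃ n : ℕ, ∃ z : X, omegaLim f z ⊆ ⋃ i ∈ Finset.Icc 1 n, UniformSpace.ball (f^[i] x) E :=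
  omega_trapped_uniform_general f E hE x
end

section
/- Let (X,d) be a compact metric space and f : X → X continuous. For every ε > 0 there exists n ∈ ℕ such that for every x ∈ X there exists z ∈ X with ω(z) ⊆ ⋃_{i=1}^{n} B_ε(f^i(x)). (The bound n is uniform in x.) -/
lemma omegaLim_isCompact {X : Type*} [MetricSpace X] [CompactSpace X] (f : X → X) (x : X) :
    IsCompact (omegaLim f x) :=
  (isClosed_iInter fun _ => isClosed_closure).isCompact

lemma pointwise_cover {X : Type*} [MetricSpace X] [CompactSpace X]
    (f : X → X) (ε : ℝ) (hε : 0 < ε) (x : X) :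
    ∃ n : ℕ, omegaLim f x ⊆ ⋃ i ∈ Finset.Icc 1 n, Metric.ball (f^[i] x) (ε/2) := by
  have hc := omegaLim_isCompact f x
  have hcov : omegaLim f x ⊆ ⋃ i : ℕ, Metric.ball (f^[i+1] x) (ε/2) := by
    intro y hy
    have h0 : y ∈ closure {w | ∃ m > 0, f^[m] x = w} := Set.mem_iInter.mp hy 0
    rw [Metric.mem_closure_iff] at h0
    obtain ⟨b, ⟨m, hm, hb⟩, hd⟩ := h0 (ε/2) (by positivity)
    refine Set.mem_iUnion.mpr ⟨m - 1, ?_⟩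
    have : m - 1 + 1 = m := Nat.succ_pred_eq_of_pos hm
    rw [this, Metric.mem_ball, hb]
    exact hd
  obtain ⟨t, ht⟩ := hc.elim_finite_subcover (fun i => Metric.ball (f^[i+1] x) (ε/2))
    (fun i => Metric.isOpen_ball) hcov
  refine ⟨t.sup id + 1, fun y hy => ?_⟩
  obtain ⟨j, hj, hyj⟩ := Set.mem_iUnion₂.mp (ht hy)
  exact Set.mem_iUnion₂.mpr ⟨j + 1, Finset.mem_Icc.mpr
    ⟨Nat.succ_pos j, Nat.succ_le_succ (Finset.le_sup (f := id) hj)⟩, hyj⟩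

lemma local_lemma {X : Type*} [MetricSpace X] [CompactSpace X]
    (f : X → X) (hf : Continuous f) (ε : ℝ) (hε : 0 < ε) (x : X) :
    ∃ n : ℕ, ∃ δ > 0, ∀ x' : X, dist x' x < δ →
      omegaLim f x ⊆ ⋃ i ∈ Finset.Icc 1 n, Metric.ball (f^[i] x') ε := by
  obtain ⟨n, hn⟩ := pointwise_cover f ε hε x
  have hδi : ∀ i : ℕ, ∃ d > 0, ∀ x', dist x' x < d → dist (f^[i] x') (f^[i] x) < ε/2 := by
    intro i
    exact Metric.continuous_iff.mp (hf.iterate i) x (ε/2) (by positivity)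
  choose d hdpos hd using hδi
  have hne : (Finset.Icc 0 n).Nonempty := ⟨0, by simp⟩
  refine ⟨n, (Finset.Icc 0 n).inf' hne d, ?_, ?_⟩
  · exact (Finset.lt_inf'_iff hne).mpr fun i _ => hdpos i
  · intro x' hx' y hy
    obtain ⟨i, hi, hyi⟩ := Set.mem_iUnion₂.mp (hn hy)
    have hin : i ∈ Finset.Icc 0 n := Finset.mem_Icc.mpr ⟨Nat.zero_le _, (Finset.mem_Icc.mp hi).2⟩
    have hdi : dist (f^[i] x') (f^[i] x) < ε/2 :=
      hd i x' (lt_of_lt_of_le hx' (Finset.inf'_le d hin))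
    refine Set.mem_iUnion₂.mpr ⟨i, hi, ?_⟩
    rw [Metric.mem_ball] at hyi ⊢
    calc dist y (f^[i] x') ≤ dist y (f^[i] x) + dist (f^[i] x) (f^[i] x') := dist_triangle _ _ _
      _ < ε/2 + ε/2 := add_lt_add hyi (by rwa [dist_comm])
      _ = ε := by ring

theorem omega_trapped_uniformly_metric {X : Type*} [MetricSpace X] [CompactSpace X]
    (f : X → X) (hf : Continuous f) (ε : ℝ) (hε : 0 < ε) :
    ∃ n : ℕ, ∀ x : X, ∃ z : X,
      omegaLim f z ⊆ ⋃ i ∈ Finset.Icc 1 n, Metric.ball (f^[i] x) ε := by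
  choose N D hDpos hD using local_lemma f hf ε hε
  have hcov : (Set.univ : Set X) ⊆ ⋃ x : X, Metric.ball x (D x) := fun x _ =>
    Set.mem_iUnion.mpr ⟨x, Metric.mem_ball_self (hDpos x)⟩
  obtain ⟨t, ht⟩ := isCompact_univ.elim_finite_subcover (fun x => Metric.ball x (D x))
    (fun x => Metric.isOpen_ball) hcov
  refine ⟨t.sup N, fun x => ?_⟩
  obtain ⟨j, hj, hxj⟩ := Set.mem_iUnion₂.mp (ht (Set.mem_univ x))
  refine ⟨j, fun y hy => ?_⟩
  have := hD j x (Metric.mem_ball.mp hxj) hy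
  obtain ⟨i, hi, hyi⟩ := Set.mem_iUnion₂.mp this
  refine Set.mem_iUnion₂.mpr ⟨i, ?_, hyi⟩
  rw [Finset.mem_Icc] at hi ⊢
  exact ⟨hi.1, hi.2.trans (Finset.le_sup hj)⟩
end

section
/- Let (X,d) be a compact metric space and f : X → X continuous. For every ε > 0 there exist n ∈ ℕ and δ > 0 such that for every δ-pseudo-orbit (x_i)_{i≥0} there exists z ∈ X with ω(z) ⊆ B_ε({x_0, …, x_n}), the ε-neighbourhood of the first n+1 points of the pseudo-orbit. -/
open Filter Topology Metric Set

theorem omega_trapped_pseudoOrbit_metric {X : Type*} [MetricSpace X] [CompactSpace X]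
    (f : X → X) (hf : Continuous f) (ε : ℝ) (hε : 0 < ε) :
    ∃ n : ℕ, ∃ δ > (0 : ℝ), ∀ x : ℕ → X, (∀ i, dist (f (x i)) (x (i + 1)) < δ) →
      ∃ z : X, omegaLim f z ⊆ ⋃ i ∈ Finset.range (n + 1), Metric.ball (x i) ε := by
  by_contra h
  push_neg at h
  -- For each k, pick a (1/(k+1))-pseudo-orbit witnessing failure with n = k.
  have hsel : ∀ k : ℕ, ∃ F : ℕ → X, (∀ i, dist (f (F i)) (F (i + 1)) < 1 / (k + 1)) ∧
      ∀ z : X, ¬ omegaLim f z ⊆ ⋃ i ∈ Finset.range (k + 1), Metric.ball (F i) ε := by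
    intro k
    obtain ⟨F, hF1, hF2⟩ := h k (1 / (k + 1)) (by positivity)
    exact ⟨F, hF1, hF2⟩
  choose F hFps hFbad using hsel
  -- Extract a convergent subsequence in the compact metrizable product space ℕ → X.
  obtain ⟨a, φ, hφ, hconv⟩ := CompactSpace.tendsto_subseq (X := ℕ → X) F
  have hconv' : ∀ i : ℕ, Tendsto (fun j => F (φ j) i) atTop (𝓝 (a i)) := by
    intro i
    exact (continuous_apply i).continuousAt.tendsto.comp hconv
  -- The limit is a true orbit.
  have horb : ∀ i, f (a i) = a (i + 1) := by
    intro i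
    have h1 : Tendsto (fun j => dist (f (F (φ j) i)) (F (φ j) (i + 1))) atTop
        (𝓝 (dist (f (a i)) (a (i + 1)))) :=
      ((hf.continuousAt.tendsto.comp (hconv' i)).dist (hconv' (i + 1)))
    have h2 : Tendsto (fun j : ℕ => 1 / ((φ j : ℝ) + 1)) atTop (𝓝 0) := by
      exact tendsto_one_div_add_atTop_nhds_zero_nat.comp hφ.tendsto_atTop
    have hle : dist (f (a i)) (a (i + 1)) ≤ 0 :=
      le_of_tendsto_of_tendsto h1 h2 (Eventually.of_forall fun j => (hFps (φ j) i).le)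
    have := dist_nonneg (x := f (a i)) (y := a (i + 1))
    rw [← dist_eq_zero]
    linarith
  have horbit : ∀ i, f^[i] (a 0) = a i := by
    intro i
    induction i with
    | zero => rfl
    | succ n ih => rw [Function.iterate_succ_apply', ih, horb]
  -- ω-limit of a 0 is inside the closure of the orbit, hence in the range of a.
  have homega : omegaLim f (a 0) ⊆ closure (Set.range a) := by
    refine (Set.iInter_subset _ 0).trans (closure_mono ?_)
    rintro y ⟨n, -, rfl⟩
    exact ⟨n, (horbit n).symm⟩
  -- Cover the compact closure by finitely many ε/2-balls centered at orbit points.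
  have hcov : closure (Set.range a) ⊆ ⋃ i : ℕ, Metric.ball (a i) (ε / 2) := by
    intro y hy
    obtain ⟨p, hp, hpd⟩ := Metric.mem_closure_iff.mp hy (ε / 2) (by positivity)
    obtain ⟨i, rfl⟩ := hp
    exact Set.mem_iUnion.mpr ⟨i, by simpa [dist_comm] using hpd⟩
  obtain ⟨t, ht⟩ := (isClosed_closure.isCompact).elim_finite_subcover
    (fun i : ℕ => Metric.ball (a i) (ε / 2)) (fun i => Metric.isOpen_ball) hcov
  set M : ℕ := t.sup id with hM
  -- Pick j large enough so that φ j ≥ M and the first M+1 points are ε/2-close.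
  have hev1 : ∀ᶠ j in atTop, M ≤ φ j := hφ.tendsto_atTop.eventually_ge_atTop M
  have hev2 : ∀ᶠ j in atTop, ∀ i ∈ Finset.range (M + 1),
      dist (F (φ j) i) (a i) < ε / 2 := by
    rw [Filter.eventually_all_finset]
    intro i _
    exact (tendsto_iff_dist_tendsto_zero.mp (hconv' i)).eventually_lt_const (by positivity)
  obtain ⟨j, hj1, hj2⟩ := (hev1.and hev2).exists
  -- Contradiction with the badness of the pseudo-orbit F (φ j).
  refine hFbad (φ j) (a 0) ?_
  intro y hy
  have hy' := ht (homega hy)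
  rw [Set.mem_iUnion₂] at hy'
  obtain ⟨i, hit, hyi⟩ := hy'
  have hiM : i ≤ M := Finset.le_sup (f := id) hit
  refine Set.mem_iUnion₂.mpr ⟨i, Finset.mem_range.mpr (by omega), ?_⟩
  have hdi : dist (F (φ j) i) (a i) < ε / 2 :=
    hj2 i (Finset.mem_range.mpr (by omega))
  have : dist y (F (φ j) i) ≤ dist y (a i) + dist (a i) (F (φ j) i) := dist_triangle _ _ _
  rw [Metric.mem_ball] at hyi ⊢
  rw [dist_comm] at hdi
  linarith
end

section
/- Let X be a compact Hausdorff space with uniformity 𝒰 and f : X → X continuous. For every entourage E ∈ 𝒰 there exist n ∈ ℕ and an entourage D ∈ 𝒰 such that for every D-pseudo-orbit (x_i)_{i≥0} there exists z ∈ X with ω(z) ⊆ B_E({x_0, …, x_n}). -/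
/-!
Each `ω(z)` is compact and lies in the closure of the orbit of `z`, so finitely many orbit points
`f^[k] z`, `k ≤ M z`, cover it up to a small entourage. By continuity of finitely many iterates
this cover survives, with a slightly larger entourage, when the orbit of `z` is replaced by the
orbit of any `y` near `z`; compactness of `X` then bounds `M` uniformly by some `n`. Finally a
pseudo-orbit with small enough jumps shadows the true orbit of `x 0` for `n` steps, so the cover
by balls around `f^[i] (x 0)` becomes a cover by balls around `x i`.
-/

open UniformSpace Set Filter Topology
open scoped SetRel Uniformity

theorem isClosed_omegaLim_s9 {X : Type*} [TopologicalSpace X] (f : X → X) (z : X) :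
    IsClosed (omegaLim f z) :=
  isClosed_iInter fun _ => isClosed_closure

theorem omegaLim_subset_closure_range {X : Type*} [TopologicalSpace X] (f : X → X) (z : X) :
    omegaLim f z ⊆ closure (range fun n => f^[n] z) :=
  (iInter_subset _ 0).trans <| closure_mono fun _ ⟨n, _, hn⟩ => ⟨n, hn⟩

def IsPseudoOrbit {X : Type*} (f : X → X) (D : SetRel X X) (x : ℕ → X) : Prop :=
  ∀ i, (f (x i), x (i + 1)) ∈ D

theorem biUnion_ball_subset_biUnion_ball {X ι : Type*} {s : Set ι} {a b : ι → X}
    {V W : SetRel X X} (hWV : W ○ W ⊆ V) (hab : ∀ i ∈ s, (b i, a i) ∈ W) :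
    ⋃ i ∈ s, ball (a i) W ⊆ ⋃ i ∈ s, ball (b i) V :=
  iUnion₂_mono fun i hi => ball_subset_of_comp_subset (hab i hi) hWV

section UniformSpace

variable {X : Type*} [UniformSpace X]

theorem IsCompact.exists_finset_subset_iUnion_ball {ι : Type*} {K : Set X} (hK : IsCompact K)
    {u : ι → X} (hKu : K ⊆ closure (range u)) {V : SetRel X X} (hV : V ∈ 𝓤 X) :
    ∃ t : Finset ι, K ⊆ ⋃ i ∈ t, ball (u i) V := by
  obtain ⟨W, ⟨hW, hWo⟩, hWV⟩ := uniformity_hasBasis_open.mem_iff.mp hV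
  have hcover : K ⊆ ⋃ i, ball (u i) W := fun k hk => by
    obtain ⟨_, ⟨i, rfl⟩, hik⟩ := closure_subset_image hW _ (hKu hk)
    exact mem_iUnion.mpr ⟨i, hik⟩
  obtain ⟨t, ht⟩ := hK.elim_finite_subcover _ (fun i => isOpen_ball _ hWo) hcover
  exact ⟨t, ht.trans (iUnion₂_mono fun i _ => ball_mono hWV _)⟩

theorem exists_omegaLim_subset_iUnion_ball_iterate [CompactSpace X] (f : X → X) (z : X)
    {V : SetRel X X} (hV : V ∈ 𝓤 X) :
    ∃ m : ℕ, omegaLim f z ⊆ ⋃ k ∈ Finset.range (m + 1), ball (f^[k] z) V := by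
  obtain ⟨t, ht⟩ := (isClosed_omegaLim_s9 f z).isCompact.exists_finset_subset_iUnion_ball
    (omegaLim_subset_closure_range f z) hV
  refine ⟨t.sup id, ht.trans <| biUnion_subset_biUnion_left fun k hk => ?_⟩
  exact Finset.mem_range_succ_iff.mpr (Finset.le_sup (f := id) hk)

theorem UniformContinuous.exists_isPseudoOrbit_iterate_mem {f : X → X}
    (hf : UniformContinuous f) (n : ℕ) {V : SetRel X X} (hV : V ∈ 𝓤 X) :
    ∃ D ∈ 𝓤 X, ∀ x, IsPseudoOrbit f D x → ∀ i ≤ n, (f^[i] (x 0), x i) ∈ V := by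
  induction n generalizing V with
  | zero =>
    refine ⟨univ, univ_mem, fun x _ i hi => ?_⟩
    obtain rfl := Nat.le_zero.mp hi
    exact refl_mem_uniformity hV
  | succ n ih =>
    obtain ⟨W, hW, hWV⟩ := comp_mem_uniformity_sets hV
    obtain ⟨D, hD, hDtrack⟩ := ih (inter_mem hV (hf hW))
    refine ⟨D ∩ W, inter_mem hD hW, fun x hx i hi => ?_⟩
    have hxD : IsPseudoOrbit f D x := fun i => (hx i).1
    rcases Nat.le_succ_iff.mp hi with hi | rfl
    · exact (hDtrack x hxD i hi).1
    · rw [Function.iterate_succ_apply']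
      exact hWV (SetRel.prodMk_mem_comp (hDtrack x hxD n le_rfl).2 (hx n).2)

theorem exists_uniform_bound_omegaLim_subset_iUnion_ball_iterate [CompactSpace X] {f : X → X}
    (hf : Continuous f) {V : SetRel X X} (hV : V ∈ 𝓤 X) :
    ∃ n : ℕ, ∀ y, ∃ z,
      omegaLim f z ⊆ ⋃ i ∈ Finset.range (n + 1), ball (f^[i] y) V := by
  obtain ⟨W, hW, hWV⟩ := comp_mem_uniformity_sets hV
  choose M hM using fun z => exists_omegaLim_subset_iUnion_ball_iterate f z hW
  have hnhds : ∀ z, {y | ∀ k ∈ Finset.range (M z + 1), (f^[k] y, f^[k] z) ∈ W} ∈ 𝓝 z :=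
    fun z => (Finset.eventually_all _).mpr fun k _ =>
      (hf.iterate k).continuousAt.preimage_mem_nhds (mem_nhds_right _ hW)
  obtain ⟨t, -, ht⟩ := isCompact_univ.elim_nhds_subcover _ fun z _ => hnhds z
  refine ⟨t.sup M, fun y => ?_⟩
  obtain ⟨z, hzt, hyz⟩ := mem_iUnion₂.mp (ht (mem_univ y))
  refine ⟨z, (hM z).trans <| (biUnion_ball_subset_biUnion_ball hWV hyz).trans ?_⟩
  exact biUnion_subset_biUnion_left <| Finset.coe_subset.mpr <|
    Finset.range_subset_range.mpr <| Nat.succ_le_succ (Finset.le_sup hzt)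

end UniformSpace

theorem omega_trapped_pseudoOrbit_uniform_general {X : Type*} [UniformSpace X] [CompactSpace X]
    (f : X → X) (hf : Continuous f) (E : Set (X × X)) (hE : E ∈ uniformity X) :
    ∃ n : ℕ, ∃ D ∈ uniformity X, ∀ x : ℕ → X, (∀ i, (f (x i), x (i + 1)) ∈ D) →
      ∃ z : X, omegaLim f z ⊆ ⋃ i ∈ Finset.range (n + 1), UniformSpace.ball (x i) E := by
  obtain ⟨V, hV, hVsymm, hVE⟩ := comp_symm_of_uniformity hE
  obtain ⟨n, hn⟩ := exists_uniform_bound_omegaLim_subset_iUnion_ball_iterate hf hV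
  obtain ⟨D, hD, htrack⟩ :=
    (CompactSpace.uniformContinuous_of_continuous hf).exists_isPseudoOrbit_iterate_mem n hV
  refine ⟨n, D, hD, fun x hx => ?_⟩
  obtain ⟨z, hz⟩ := hn (x 0)
  exact ⟨z, hz.trans <| biUnion_ball_subset_biUnion_ball hVE fun i hi =>
    hVsymm <| htrack x hx i <| Finset.mem_range_succ_iff.mp hi⟩

theorem omega_trapped_pseudoOrbit_uniform {X : Type*} [UniformSpace X] [CompactSpace X] [T2Space X]
    (f : X → X) (hf : Continuous f) (E : Set (X × X)) (hE : E ∈ uniformity X) :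
    ∃ n : ℕ, ∃ D ∈ uniformity X, ∀ x : ℕ → X, (∀ i, (f (x i), x (i + 1)) ∈ D) →
      ∃ z : X, omegaLim f z ⊆ ⋃ i ∈ Finset.range (n + 1), UniformSpace.ball (x i) E :=
  omega_trapped_pseudoOrbit_uniform_general f hf E hE
end

section
/- Let (X,d) be a compact metric space and f : X → X continuous. Then (X,f) has the second weak shadowing property: for every ε > 0 there exists δ > 0 such that for every δ-pseudo-orbit (x_i)_{i≥0} there exists z ∈ X with Orb(z) = {f^k(z) : k ≥ 0} ⊆ B_ε({x_i : i ≥ 0}). -/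
/-!
Suppose the conclusion fails for some `ε`. Then for every `n` there is a `1/(n+1)`-pseudo-orbit
`xₙ` no point of whose orbit stays `ε`-close to `{xₙ i}`. The closures `Kₙ` of these pseudo-orbits
are nonempty compact sets with `f(Kₙ)` inside the closed `1/(n+1)`-neighbourhood of `Kₙ`, and the
space of nonempty compact sets is compact for the Hausdorff metric, so a subsequence converges to
some `L`. In the limit `L` is `f`-invariant, so the orbit of any `z ∈ L` stays in `L`, which is
eventually within Hausdorff distance `ε` of `Kₙ`: a contradiction.
-/

open Set Filter Topology Metric TopologicalSpace

section

variable {X : Type*} [MetricSpace X]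

namespace TopologicalSpace.NonemptyCompacts

def closureRange [CompactSpace X] {ι : Type*} [Nonempty ι] (x : ι → X) : NonemptyCompacts X :=
  ⟨⟨closure (range x), isClosed_closure.isCompact⟩, (range_nonempty x).closure⟩

theorem infDist_le_dist {K L : NonemptyCompacts X} {p : X} (hp : p ∈ L) :
    infDist p K ≤ dist K L := by
  simpa [infDist_zero_of_mem hp, hausdorffDist_comm, ← Metric.NonemptyCompacts.dist_eq] using
    infDist_le_infDist_add_hausdorffDist (x := p) (edist_ne_top L K)

theorem exists_tendsto_of_tendsto {ι : Type*} {l : Filter ι} {K : ι → NonemptyCompacts X}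
    {L : NonemptyCompacts X} (hK : Tendsto K l (𝓝 L)) {p : X} (hp : p ∈ L) :
    ∃ q : ι → X, (∀ i, q i ∈ K i) ∧ Tendsto q l (𝓝 p) := by
  choose q hqK hq using fun i => (K i).isCompact.exists_infDist_eq_dist (K i).nonempty p
  refine ⟨q, hqK, tendsto_iff_dist_tendsto_zero.2 ?_⟩
  refine squeeze_zero (fun _ => dist_nonneg) (fun i => ?_) (tendsto_iff_dist_tendsto_zero.1 hK)
  rw [dist_comm, ← hq]
  exact infDist_le_dist hp

theorem mapsTo_of_tendsto {f : X → X} (hf : Continuous f) {ι : Type*} {l : Filter ι} [l.NeBot]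
    {K : ι → NonemptyCompacts X} {L : NonemptyCompacts X} (hK : Tendsto K l (𝓝 L)) {δ : ι → ℝ}
    (hδ : Tendsto δ l (𝓝 0)) (hKδ : ∀ i, ∀ p ∈ K i, infDist (f p) (K i) ≤ δ i) :
    MapsTo f L L := by
  intro p hp
  obtain ⟨q, hqK, hq⟩ := exists_tendsto_of_tendsto hK hp
  have hpair : Tendsto (fun i => (f (q i), K i)) l (𝓝 (f p, L)) :=
    ((hf.tendsto p).comp hq).prodMk_nhds hK
  -- `(y, K) ↦ infDist y K` is jointly Lipschitz, so `infDist (f (q i)) (K i) → infDist (f p) L`.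
  have hlim := (lipschitz_infDist.continuous.tendsto (f p, L)).comp hpair
  have hzero : infDist (f p) L ≤ 0 :=
    le_of_tendsto_of_tendsto' hlim hδ fun i => hKδ i (q i) (hqK i)
  exact (L.isCompact.isClosed.mem_iff_infDist_zero L.nonempty).2
    (le_antisymm hzero infDist_nonneg)

end TopologicalSpace.NonemptyCompacts

theorem infDist_apply_le_of_mem_closure {f : X → X} (hf : Continuous f) {s : Set X} {δ : ℝ}
    (hs : ∀ y ∈ s, infDist (f y) s ≤ δ) : ∀ p ∈ closure s, infDist (f p) (closure s) ≤ δ := by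
  simp_rw [infDist_closure]
  exact fun p hp => closure_minimal hs
    (isClosed_le ((continuous_infDist_pt s).comp hf) continuous_const) hp

theorem infDist_apply_le_of_pseudoOrbit {f : X → X} {x : ℕ → X} {δ : ℝ}
    (hx : ∀ i, dist (f (x i)) (x (i + 1)) < δ) : ∀ y ∈ range x, infDist (f y) (range x) ≤ δ := by
  rintro _ ⟨i, rfl⟩
  exact (infDist_le_dist_of_mem (mem_range_self (i + 1))).trans (hx i).le

end

open NonemptyCompacts in
theorem second_weak_shadowing_metric {X : Type*} [MetricSpace X] [CompactSpace X]
    (f : X → X) (hf : Continuous f) (ε : ℝ) (hε : 0 < ε) :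
    ∃ δ > (0 : ℝ), ∀ x : ℕ → X, (∀ i, dist (f (x i)) (x (i + 1)) < δ) →
      ∃ z : X, ∀ k : ℕ, ∃ i : ℕ, dist (x i) (f^[k] z) < ε := by
  by_contra! hcon
  choose x hx hxz using fun n : ℕ => hcon (1 / (n + 1)) (by positivity)
  obtain ⟨L, -, φ, hφ, hL⟩ :=
    isCompact_univ.tendsto_subseq fun n => mem_univ (closureRange (x n))
  have hLf : MapsTo f L L :=
    mapsTo_of_tendsto hf hL (tendsto_one_div_add_atTop_nhds_zero_nat.comp hφ.tendsto_atTop)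
      fun j => infDist_apply_le_of_mem_closure hf (infDist_apply_le_of_pseudoOrbit (hx (φ j)))
  obtain ⟨j, hj⟩ := (hL.eventually (ball_mem_nhds L hε)).exists
  obtain ⟨z, hz⟩ := L.nonempty
  obtain ⟨k, hk⟩ := hxz (φ j) z
  have hclose : infDist (f^[k] z) (range (x (φ j))) < ε := by
    rw [← infDist_closure]
    exact (infDist_le_dist (K := closureRange (x (φ j))) (hLf.iterate k hz)).trans_lt hj
  obtain ⟨_, ⟨i, rfl⟩, hi⟩ := (infDist_lt_iff (range_nonempty _)).1 hclose
  exact (hk i).not_gt (by rwa [dist_comm])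
end

section
/- Let (X,d) be a compact metric space and f : X → X continuous. If (X,f) is minimal, then for every ε > 0 there exist δ > 0 and n ∈ ℕ such that for any two δ-pseudo-orbits (x_i)_{i≥0} and (y_i)_{i≥0}, one has {y_0,…,y_n} ⊆ B_ε({x_0,…,x_n}) and {x_0,…,x_n} ⊆ B_ε({y_0,…,y_n}). -/
lemma orbit_dense {X : Type*} [MetricSpace X] (f : X → X)
    (hmin : ∀ x : X, omegaLim f x = Set.univ) (x z : X) (r : ℝ) (hr : 0 < r) :
    ∃ i, dist (f^[i] x) z < r := by
  have hz : z ∈ omegaLim f x := by rw [hmin]; trivial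
  have hz0 : z ∈ closure {y | ∃ n > 0, f^[n] x = y} := by
    have := Set.mem_iInter.mp hz 0
    exact this
  rcases Metric.mem_closure_iff.mp hz0 r hr with ⟨y, ⟨n, _, rfl⟩, hd⟩
  exact ⟨n, by rwa [dist_comm]⟩

lemma uniform_dense {X : Type*} [MetricSpace X] [CompactSpace X] (f : X → X)
    (hf : Continuous f) (hmin : ∀ x : X, omegaLim f x = Set.univ)
    (r : ℝ) (hr : 0 < r) :
    ∃ N : ℕ, ∀ x z : X, ∃ i ≤ N, dist (f^[i] x) z < r := by
  set V : ℕ → Set (X × X) := fun m => ⋃ i ∈ Finset.range (m + 1),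
    {p : X × X | dist (f^[i] p.1) p.2 < r} with hV
  have hVopen : ∀ m, IsOpen (V m) := by
    intro m
    apply isOpen_biUnion
    intro i _
    have : Continuous fun p : X × X => dist (f^[i] p.1) p.2 :=
      Continuous.dist ((hf.iterate i).comp continuous_fst) continuous_snd
    exact isOpen_lt this continuous_const
  have hVcover : (Set.univ : Set (X × X)) ⊆ ⋃ m, V m := by
    intro p _
    rcases orbit_dense f hmin p.1 p.2 r hr with ⟨i, hi⟩
    exact Set.mem_iUnion.mpr ⟨i, Set.mem_biUnion (Finset.mem_range.mpr (Nat.lt_succ_self i)) hi⟩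
  rcases isCompact_univ.elim_finite_subcover V hVopen hVcover with ⟨t, ht⟩
  refine ⟨t.sup id, fun x z => ?_⟩
  have hmem : (x, z) ∈ ⋃ m ∈ t, V m := ht (Set.mem_univ _)
  rcases Set.mem_iUnion₂.mp hmem with ⟨m, hm, hx⟩
  rcases Set.mem_iUnion₂.mp hx with ⟨i, hi, hd⟩
  refine ⟨i, ?_, hd⟩
  have : i ≤ m := Nat.lt_succ_iff.mp (Finset.mem_range.mp hi)
  exact le_trans this (Finset.le_sup (f := id) hm)

lemma pseudo_track {X : Type*} [MetricSpace X] [CompactSpace X] (f : X → X)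
    (hf : Continuous f) (N : ℕ) (γ : ℝ) (hγ : 0 < γ) :
    ∃ δ > (0 : ℝ), ∀ x : ℕ → X, (∀ i, dist (f (x i)) (x (i + 1)) < δ) →
      ∀ i ≤ N, dist (f^[i] (x 0)) (x i) < γ := by
  induction N generalizing γ with
  | zero =>
    refine ⟨1, one_pos, fun x _ i hi => ?_⟩
    interval_cases i
    simpa using hγ
  | succ N ih =>
    have huc : UniformContinuous f := CompactSpace.uniformContinuous_of_continuous hf
    rcases Metric.uniformContinuous_iff.mp huc (γ / 2) (by linarith) with ⟨η, hη, hηf⟩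
    rcases ih (min η γ) (lt_min hη hγ) with ⟨δ', hδ', hδ'f⟩
    refine ⟨min δ' (γ / 2), lt_min hδ' (by linarith), fun x hx i hi => ?_⟩
    have hx' : ∀ i, dist (f (x i)) (x (i + 1)) < δ' :=
      fun i => lt_of_lt_of_le (hx i) (min_le_left _ _)
    rcases Nat.lt_succ_iff_lt_or_eq.mp (Nat.lt_succ_of_le hi) with h | rfl
    · exact lt_of_lt_of_le (hδ'f x hx' i (Nat.lt_succ_iff.mp h)) (min_le_right _ _)
    · have h1 : dist (f^[N] (x 0)) (x N) < η :=
        lt_of_lt_of_le (hδ'f x hx' N le_rfl) (min_le_left _ _)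
      have h2 : dist (f (f^[N] (x 0))) (f (x N)) < γ / 2 := hηf h1
      have h3 : dist (f (x N)) (x (N + 1)) < γ / 2 :=
        lt_of_lt_of_le (hx N) (min_le_right _ _)
      have h4 : f^[N + 1] (x 0) = f (f^[N] (x 0)) := Function.iterate_succ_apply' f N (x 0)
      calc dist (f^[N + 1] (x 0)) (x (N + 1))
          ≤ dist (f^[N + 1] (x 0)) (f (x N)) + dist (f (x N)) (x (N + 1)) := dist_triangle _ _ _
        _ < γ / 2 + γ / 2 := by rw [h4]; exact add_lt_add h2 h3
        _ = γ := by ring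

theorem minimal_pseudoOrbits_close {X : Type*} [MetricSpace X] [CompactSpace X]
    (f : X → X) (hf : Continuous f) (hmin : ∀ x : X, omegaLim f x = Set.univ)
    (ε : ℝ) (hε : 0 < ε) :
    ∃ δ > (0 : ℝ), ∃ n : ℕ, ∀ x y : ℕ → X,
      (∀ i, dist (f (x i)) (x (i + 1)) < δ) → (∀ i, dist (f (y i)) (y (i + 1)) < δ) →
      (∀ j ≤ n, ∃ i ≤ n, dist (x i) (y j) < ε) ∧ (∀ j ≤ n, ∃ i ≤ n, dist (y i) (x j) < ε) := by
  rcases uniform_dense f hf hmin (ε / 2) (by linarith) with ⟨N, hN⟩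
  rcases pseudo_track f hf N (ε / 2) (by linarith) with ⟨δ, hδ, hδf⟩
  have key : ∀ x : ℕ → X, (∀ i, dist (f (x i)) (x (i + 1)) < δ) →
      ∀ z : X, ∃ i ≤ N, dist (x i) z < ε := by
    intro x hx z
    rcases hN (x 0) z with ⟨i, hiN, hi⟩
    refine ⟨i, hiN, ?_⟩
    calc dist (x i) z ≤ dist (x i) (f^[i] (x 0)) + dist (f^[i] (x 0)) z := dist_triangle _ _ _
      _ < ε / 2 + ε / 2 := add_lt_add (by rw [dist_comm]; exact hδf x hx i hiN) hi
      _ = ε := by ring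
  exact ⟨δ, hδ, N, fun x y hx hy =>
    ⟨fun j _ => key x hx (y j), fun j _ => key y hy (x j)⟩⟩
end

section
/- Let (X,d) be a compact metric space and f : X → X continuous. If for every ε > 0 there exist δ > 0 and n ∈ ℕ such that any two δ-pseudo-orbits (x_i) and (y_i) satisfy {y_0,…,y_n} ⊆ B_ε({x_0,…,x_n}) and {x_0,…,x_n} ⊆ B_ε({y_0,…,y_n}), then (X,f) is minimal. -/
theorem pseudoOrbits_close_implies_minimal {X : Type*} [MetricSpace X] [CompactSpace X]
    (f : X → X) (hf : Continuous f)
    (h : ∀ ε > (0 : ℝ), ∃ δ > (0 : ℝ), ∃ n : ℕ, ∀ x y : ℕ → X,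
      (∀ i, dist (f (x i)) (x (i + 1)) < δ) → (∀ i, dist (f (y i)) (y (i + 1)) < δ) →
      (∀ j ≤ n, ∃ i ≤ n, dist (x i) (y j) < ε) ∧ (∀ j ≤ n, ∃ i ≤ n, dist (y i) (x j) < ε)) :
    ∀ x : X, omegaLim f x = Set.univ := by
  intro x
  ext y
  simp only [Set.mem_univ, iff_true, omegaLim, Set.mem_iInter]
  intro N
  rw [Metric.mem_closure_iff]
  intro ε hε
  obtain ⟨δ, hδ, n, hn⟩ := h ε hε
  have hx : ∀ i, dist (f ((fun i => f^[N + 1 + i] x) i)) ((fun i => f^[N + 1 + i] x) (i + 1)) < δ := by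
    intro i
    have he : f^[N + 1 + (i + 1)] x = f (f^[N + 1 + i] x) := by
      rw [show N + 1 + (i + 1) = (N + 1 + i) + 1 from by ring, Function.iterate_succ_apply']
    simp only []
    rw [he]
    simpa using hδ
  have hy : ∀ i, dist (f ((fun i => f^[i] y) i)) ((fun i => f^[i] y) (i + 1)) < δ := by
    intro i
    simp only [← Function.iterate_succ_apply' f i y]
    simpa using hδ
  obtain ⟨h1, _⟩ := hn (fun i => f^[N + 1 + i] x) (fun i => f^[i] y) hx hy
  obtain ⟨i, hi, hdist⟩ := h1 0 (Nat.zero_le n)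
  refine ⟨f^[N + 1 + i] x, ⟨N + 1 + i, by omega, rfl⟩, ?_⟩
  simpa [dist_comm] using hdist
end

section
/- Let (X,d) be a compact metric space and f : X → X continuous. If (X,f) is minimal, then it has the strong orbital shadowing property: for every ε > 0 there exists δ > 0 such that for every δ-pseudo-orbit (x_i)_{i≥0} there exists z ∈ X such that for all N ∈ ℕ₀, {f^{N+i}(z) : i ≥ 0} ⊆ B_ε({x_{N+i} : i ≥ 0}) and {x_{N+i} : i ≥ 0} ⊆ B_ε({f^{N+i}(z) : i ≥ 0}). -/
lemma dense_orbit_approx {X : Type*} [MetricSpace X] (f : X → X)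
    (hmin : ∀ x : X, omegaLim f x = Set.univ) (ε : ℝ) (hε : 0 < ε) (x y : X) :
    ∃ n : ℕ, dist (f^[n] x) y < ε := by
  have hy : y ∈ omegaLim f x := by rw [hmin x]; trivial
  have hy0 : y ∈ closure {y' | ∃ n > 0, f^[n] x = y'} := by
    have := Set.mem_iInter.1 hy 0
    exact this
  rcases Metric.mem_closure_iff.1 hy0 ε hε with ⟨b, ⟨n, _, rfl⟩, hb⟩
  exact ⟨n, by rwa [dist_comm]⟩

lemma uniform_min {X : Type*} [MetricSpace X] [CompactSpace X] (f : X → X)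
    (hf : Continuous f) (hmin : ∀ x : X, omegaLim f x = Set.univ)
    (ε : ℝ) (hε : 0 < ε) :
    ∃ L : ℕ, ∀ x y : X, ∃ k ≤ L, dist (f^[k] x) y < ε := by
  have hε3 : 0 < ε / 3 := by linarith
  -- finite ε/3 net
  obtain ⟨t, htf, htc⟩ := (Metric.totallyBounded_iff.1
    (isCompact_univ (X := X)).totallyBounded) (ε / 3) hε3
  classical
  let T : Finset X := htf.toFinset
  have hTc : ∀ y : X, ∃ y₀ ∈ T, dist y y₀ < ε / 3 := by
    intro y
    have := htc (Set.mem_univ y)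
    simp only [Set.mem_iUnion] at this
    rcases this with ⟨y₀, hy₀, hyd⟩
    exact ⟨y₀, htf.mem_toFinset.2 hy₀, Metric.mem_ball.1 hyd⟩
  -- choose times
  choose n hn using fun x y₀ => dense_orbit_approx f hmin (ε / 3) hε3 x y₀
  -- open neighborhoods
  let U : X → Set X := fun x => ⋂ y₀ ∈ T, (f^[n x y₀]) ⁻¹' Metric.ball y₀ (2 * ε / 3)
  have hUopen : ∀ x, IsOpen (U x) := by
    intro x
    exact isOpen_biInter_finset fun y₀ _ =>
      (Metric.isOpen_ball).preimage (hf.iterate _)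
  have hUmem : ∀ x, x ∈ U x := by
    intro x
    refine Set.mem_iInter₂.2 fun y₀ _ => ?_
    have := hn x y₀
    simp only [Set.mem_preimage, Metric.mem_ball]
    linarith
  obtain ⟨s, hs⟩ := (isCompact_univ (X := X)).elim_finite_subcover U hUopen
    (fun x _ => Set.mem_iUnion.2 ⟨x, hUmem x⟩)
  refine ⟨s.sup (fun x => T.sup (fun y₀ => n x y₀)), fun x y => ?_⟩
  rcases Set.mem_iUnion₂.1 (hs (Set.mem_univ x)) with ⟨x₀, hx₀s, hxU⟩
  rcases hTc y with ⟨y₀, hy₀T, hyd⟩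
  refine ⟨n x₀ y₀, ?_, ?_⟩
  · exact le_trans (Finset.le_sup hy₀T) (Finset.le_sup (f := fun x => T.sup fun y₀ => n x y₀) hx₀s)
  · have h1 : dist (f^[n x₀ y₀] x) y₀ < 2 * ε / 3 := by
      have := Set.mem_iInter₂.1 hxU y₀ hy₀T
      simpa [Metric.mem_ball] using this
    calc dist (f^[n x₀ y₀] x) y ≤ dist (f^[n x₀ y₀] x) y₀ + dist y₀ y := dist_triangle _ _ _
      _ < 2 * ε / 3 + ε / 3 := by rw [dist_comm y₀ y]; linarith
      _ = ε := by ring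

lemma fin_shadow {X : Type*} [MetricSpace X] [CompactSpace X] (f : X → X)
    (hf : Continuous f) (L : ℕ) :
    ∀ ε : ℝ, 0 < ε → ∃ δ > (0 : ℝ), ∀ x : ℕ → X,
      (∀ i, dist (f (x i)) (x (i + 1)) < δ) →
      ∀ k ≤ L, dist (f^[k] (x 0)) (x k) < ε := by
  induction L with
  | zero =>
    intro ε hε
    refine ⟨ε, hε, fun x _ k hk => ?_⟩
    interval_cases k
    simpa using hε
  | succ L ih =>
    intro ε hε
    have hfu : UniformContinuous f := CompactSpace.uniformContinuous_of_continuous hf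
    obtain ⟨η, hη, hηd⟩ := Metric.uniformContinuous_iff.1 hfu (ε / 2) (by linarith)
    obtain ⟨δ', hδ', hδ'd⟩ := ih (min η (ε / 2)) (by positivity)
    refine ⟨min δ' (ε / 2), by positivity, fun x hx k hk => ?_⟩
    have hx' : ∀ i, dist (f (x i)) (x (i + 1)) < δ' :=
      fun i => lt_of_lt_of_le (hx i) (min_le_left _ _)
    rcases Nat.lt_succ_iff_lt_or_eq.1 (Nat.lt_succ_of_le hk) with hkL | rfl
    · have := hδ'd x hx' k (Nat.lt_succ_iff.1 hkL)
      exact lt_of_lt_of_le this (le_trans (min_le_right _ _) (by linarith))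
    · have hL : dist (f^[L] (x 0)) (x L) < min η (ε / 2) := hδ'd x hx' L le_rfl
      have h1 : dist (f (f^[L] (x 0))) (f (x L)) < ε / 2 :=
        hηd (lt_of_lt_of_le hL (min_le_left _ _))
      have h2 : dist (f (x L)) (x (L + 1)) < ε / 2 :=
        lt_of_lt_of_le (hx L) (min_le_right _ _)
      calc dist (f^[L + 1] (x 0)) (x (L + 1))
          = dist (f (f^[L] (x 0))) (x (L + 1)) := by rw [Function.iterate_succ_apply']
        _ ≤ dist (f (f^[L] (x 0))) (f (x L)) + dist (f (x L)) (x (L + 1)) :=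
            dist_triangle _ _ _
        _ < ε / 2 + ε / 2 := by linarith
        _ = ε := by ring

theorem minimal_strong_orbital_shadowing {X : Type*} [MetricSpace X] [CompactSpace X]
    (f : X → X) (hf : Continuous f) (hmin : ∀ x : X, omegaLim f x = Set.univ)
    (ε : ℝ) (hε : 0 < ε) :
    ∃ δ > (0 : ℝ), ∀ x : ℕ → X, (∀ i, dist (f (x i)) (x (i + 1)) < δ) →
      ∃ z : X, ∀ N : ℕ,
        (∀ i : ℕ, ∃ j : ℕ, dist (x (N + j)) (f^[N + i] z) < ε) ∧
        (∀ i : ℕ, ∃ j : ℕ, dist (f^[N + j] z) (x (N + i)) < ε) := by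
  have hε2 : 0 < ε / 2 := by linarith
  obtain ⟨L, hL⟩ := uniform_min f hf hmin (ε / 2) hε2
  obtain ⟨δ, hδ, hδd⟩ := fin_shadow f hf L (ε / 2) hε2
  refine ⟨δ, hδ, fun x hx => ⟨x 0, fun N => ⟨?_, ?_⟩⟩⟩
  · -- pseudo-orbit points approximate orbit points
    intro i
    obtain ⟨k, hkL, hk⟩ := hL (x N) (f^[N + i] (x 0))
    have hshift : dist (f^[k] (x N)) (x (N + k)) < ε / 2 := by
      have := hδd (fun m => x (N + m)) (fun m => by
        have := hx (N + m)
        simpa [Nat.add_assoc] using this) k hkL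
      simpa using this
    refine ⟨k, ?_⟩
    calc dist (x (N + k)) (f^[N + i] (x 0))
        ≤ dist (x (N + k)) (f^[k] (x N)) + dist (f^[k] (x N)) (f^[N + i] (x 0)) :=
          dist_triangle _ _ _
      _ < ε / 2 + ε / 2 := by rw [dist_comm] at hshift; linarith
      _ = ε := by ring
  · -- orbit points approximate pseudo-orbit points
    intro i
    obtain ⟨k, hkL, hk⟩ := hL (f^[N] (x 0)) (x (N + i))
    refine ⟨k, ?_⟩
    have heq : f^[N + k] (x 0) = f^[k] (f^[N] (x 0)) := by
      rw [add_comm, Function.iterate_add_apply]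
    rw [heq]
    linarith
end

section
/- Let (X,d) be a compact metric space and f : X → X continuous, and suppose (X,f) is minimal. Then for every ε > 0 there exist δ > 0 and n ∈ ℕ such that for any two δ-pseudo-orbits (x_i)_{i≥0} and (y_i)_{i≥0}, the Hausdorff distance between the finite sets {x_0,…,x_n} and {y_0,…,y_n} is less than ε. -/
-- Shadowing-lite: pseudo-orbits stay close to true orbits for finitely many steps.
lemma pseudo_close {X : Type*} [MetricSpace X] [CompactSpace X]
    (f : X → X) (hf : Continuous f) (n : ℕ) :
    ∀ r : ℝ, 0 < r → ∃ δ > (0:ℝ), ∀ x : ℕ → X,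
      (∀ i, dist (f (x i)) (x (i + 1)) < δ) → ∀ i ≤ n, dist (x i) (f^[i] (x 0)) < r := by
  induction n with
  | zero =>
    intro r hr
    refine ⟨r, hr, fun x _ i hi => ?_⟩
    interval_cases i
    simpa using hr
  | succ n ih =>
    intro r hr
    have huc : UniformContinuous f := CompactSpace.uniformContinuous_of_continuous hf
    obtain ⟨r', hr', hfr'⟩ := Metric.uniformContinuous_iff.1 huc (r / 2) (by linarith)
    obtain ⟨δ', hδ', hδ⟩ := ih (min r' (r / 2)) (lt_min hr' (by linarith))
    refine ⟨min δ' (r / 2), lt_min hδ' (by linarith), fun x hx i hi => ?_⟩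
    have hps : ∀ j, dist (f (x j)) (x (j + 1)) < δ' :=
      fun j => (hx j).trans_le (min_le_left _ _)
    rcases Nat.lt_succ_iff_lt_or_eq.1 (Nat.lt_succ_of_le hi) with h | h
    · have := hδ x hps i (Nat.lt_succ_iff.1 h)
      calc dist (x i) (f^[i] (x 0)) < min r' (r/2) := this
        _ ≤ r/2 := min_le_right _ _
        _ < r := by linarith
    · subst h
      have h1 : dist (x n) (f^[n] (x 0)) < r' :=
        lt_of_lt_of_le (hδ x hps n le_rfl) (min_le_left _ _)
      have h2 : dist (f (x n)) (f (f^[n] (x 0))) < r / 2 := hfr' h1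
      have h3 : dist (x (n+1)) (f (x n)) < r / 2 := by
        rw [dist_comm]; exact (hx n).trans_le (min_le_right _ _)
      calc dist (x (n+1)) (f^[n+1] (x 0))
          ≤ dist (x (n+1)) (f (x n)) + dist (f (x n)) (f^[n+1] (x 0)) := dist_triangle _ _ _
        _ = dist (x (n+1)) (f (x n)) + dist (f (x n)) (f (f^[n] (x 0))) := by
            rw [Function.iterate_succ_apply']
        _ < r/2 + r/2 := add_lt_add h3 h2
        _ = r := by ring

theorem minimal_pseudoOrbits_hausdorffDist {X : Type*} [MetricSpace X] [CompactSpace X]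
    (f : X → X) (hf : Continuous f) (hmin : ∀ x : X, omegaLim f x = Set.univ)
    (ε : ℝ) (hε : 0 < ε) :
    ∃ δ > (0 : ℝ), ∃ n : ℕ, ∀ x y : ℕ → X,
      (∀ i, dist (f (x i)) (x (i + 1)) < δ) → (∀ i, dist (f (y i)) (y (i + 1)) < δ) →
      Metric.hausdorffDist {p | ∃ i ≤ n, x i = p} {p | ∃ i ≤ n, y i = p} < ε := by
  cases isEmpty_or_nonempty X with
  | inl h =>
    exact ⟨1, one_pos, 0, fun x => (h.false (x 0)).elim⟩
  | inr hne =>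
  -- orbit visits every ball
  have visits : ∀ x z : X, ∀ r : ℝ, 0 < r → ∃ i : ℕ, dist (f^[i] x) z < r := by
    intro x z r hr
    have hz : z ∈ omegaLim f x := by rw [hmin x]; trivial
    have hz0 : z ∈ closure {y | ∃ n > 0, f^[n] x = y} := Set.mem_iInter.1 hz 0
    obtain ⟨w, ⟨m, _, hw⟩, hd⟩ := Metric.mem_closure_iff.1 hz0 r hr
    exact ⟨m, by rw [hw, dist_comm]; exact hd⟩
  -- uniform density of orbit segments
  have key : ∀ c : X, ∃ m : ℕ, ∀ x : X, ∃ i ≤ m, dist (f^[i] x) c < ε / 8 := by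
    intro c
    have hcov : Set.univ ⊆ ⋃ i : ℕ, (f^[i]) ⁻¹' (Metric.ball c (ε / 8)) := by
      intro x _
      obtain ⟨i, hi⟩ := visits x c (ε / 8) (by linarith)
      exact Set.mem_iUnion.2 ⟨i, hi⟩
    obtain ⟨s, hs⟩ := isCompact_univ.elim_finite_subcover _
      (fun i : ℕ => (hf.iterate i).isOpen_preimage _ Metric.isOpen_ball) hcov
    refine ⟨s.sup id, fun x => ?_⟩
    obtain ⟨i, his, hxi⟩ := Set.mem_iUnion₂.1 (hs (Set.mem_univ x))
    exact ⟨i, Finset.le_sup (f := id) his, hxi⟩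
  choose g hg using key
  obtain ⟨t, -, hfin, hcov⟩ := finite_cover_balls_of_compact (isCompact_univ : IsCompact (Set.univ : Set X))
    (by linarith : (0:ℝ) < ε / 8)
  set n : ℕ := hfin.toFinset.sup g with hn
  have hdense : ∀ x z : X, ∃ i ≤ n, dist (f^[i] x) z < ε / 4 := by
    intro x z
    obtain ⟨c, hct, hzc⟩ := Set.mem_iUnion₂.1 (hcov (Set.mem_univ z))
    obtain ⟨i, hi, hic⟩ := hg c x
    refine ⟨i, hi.trans (Finset.le_sup (hfin.mem_toFinset.2 hct)), ?_⟩
    calc dist (f^[i] x) z ≤ dist (f^[i] x) c + dist c z := dist_triangle _ _ _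
      _ < ε / 8 + ε / 8 := add_lt_add hic (by rw [dist_comm]; exact hzc)
      _ ≤ ε / 4 := by linarith
  obtain ⟨δ, hδpos, hδ⟩ := pseudo_close f hf n (ε / 4) (by linarith)
  refine ⟨δ, hδpos, n, fun x y hx hy => ?_⟩
  -- each segment is ε/2-dense
  have seg_dense : ∀ (x : ℕ → X), (∀ i, dist (f (x i)) (x (i + 1)) < δ) →
      ∀ z : X, ∃ i ≤ n, dist (x i) z < ε / 2 := by
    intro x hx z
    obtain ⟨i, hi, hiz⟩ := hdense (x 0) z
    refine ⟨i, hi, ?_⟩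
    calc dist (x i) z ≤ dist (x i) (f^[i] (x 0)) + dist (f^[i] (x 0)) z := dist_triangle _ _ _
      _ < ε / 4 + ε / 4 := add_lt_add (hδ x hx i hi) hiz
      _ = ε / 2 := by ring
  have hle : Metric.hausdorffDist {p | ∃ i ≤ n, x i = p} {p | ∃ i ≤ n, y i = p} ≤ ε / 2 := by
    apply Metric.hausdorffDist_le_of_infDist (by linarith)
    · rintro p ⟨i, hi, rfl⟩
      obtain ⟨j, hj, hjd⟩ := seg_dense y hy (x i)
      have : Metric.infDist (x i) {p | ∃ i ≤ n, y i = p} ≤ dist (x i) (y j) :=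
        Metric.infDist_le_dist_of_mem ⟨j, hj, rfl⟩
      rw [dist_comm] at hjd
      linarith
    · rintro p ⟨i, hi, rfl⟩
      obtain ⟨j, hj, hjd⟩ := seg_dense x hx (y i)
      have : Metric.infDist (y i) {p | ∃ i ≤ n, x i = p} ≤ dist (y i) (x j) :=
        Metric.infDist_le_dist_of_mem ⟨j, hj, rfl⟩
      rw [dist_comm] at hjd
      linarith
  linarith
end
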